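/- (Appendix C) Let c ∈ [0,1] and for λ₁, …, λₙ ∈ [0,1] define W_i(c, λ) = 1/2 + (c·λ_i/2^i)·∏_{k=1}^{i−1}(1 + √(1 − λ_k²)). Then: (i) for every c ∈ [0,1] there do NOT exist λ₁, …, λ₇ ∈ [0,1] with W_i(c, λ) > 3/4 for all i ∈ {1, …, 7}; (ii) W₁(c, λ₁) = (1 + c·λ₁)/2 > 3/4 if and only if 2·c·λ₁ > 1; in particular, if c ≤ 1/2 then W₁(c, λ₁) ≤ 3/4 for every λ₁ ∈ [0,1], so no observer can prepare a remote state at Alice's side with nonclassical fidelity when the Werner parameter satisfies 0 ≤ c ≤ 1/2. -/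

import Mathlib

/-!
Write `∏_{k<i} (1 + √(1 - λ_k²)) = 2^(i-1) x_i`, so that `x_0 = 2`,
`x_{i+1} = x_i (1 + √(1 - λ_i²)) / 2` and the `i`-th fidelity is `1/2 + c λ_i x_i / 4`.
Observer `i` beats `3/4` only if `λ_i x_i > 1`, and then
`x_i √(1 - λ_i²) = √(x_i² - (λ_i x_i)²) ≤ √(x_i² - 1)`, i.e. `x_{i+1} ≤ g(x_i)` for the monotone
map `g x = (x + √(x² - 1)) / 2`. Hence `x_6 ≤ g^[6] 2 < 0.91`, so `λ_6 x_6 > 1` is impossible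
for `λ_6 ≤ 1`.
-/

open Finset Fin.NatCast

lemma Fin.prod_Iio_eq_prod_range {M : Type*} [CommMonoid M] {n : ℕ} [NeZero n]
    (f : Fin n → M) (i : Fin n) : ∏ k ∈ Iio i, f k = ∏ k ∈ range i, f k := by
  rw [← Nat.Iio_eq_range, ← Fin.map_valEmbedding_Iio, prod_map]
  simp

lemma mul_one_add_sqrt_one_sub_sq_le {x l b : ℝ} (hx : 0 ≤ x) (hb : 0 ≤ b) (hbl : b ≤ l * x) :
    x * (1 + √(1 - l ^ 2)) ≤ x + √(x ^ 2 - b ^ 2) := by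
  have hsqrt : x * √(1 - l ^ 2) = √(x ^ 2 - (l * x) ^ 2) := by
    rw [← Real.sqrt_sq hx, ← Real.sqrt_mul (sq_nonneg x), Real.sqrt_sq hx]
    ring_nf
  have hle : √(x ^ 2 - (l * x) ^ 2) ≤ √(x ^ 2 - b ^ 2) :=
    Real.sqrt_le_sqrt (by nlinarith)
  linarith

namespace RSP

noncomputable def step (x : ℝ) : ℝ := (x + √(x ^ 2 - 1)) / 2

lemma step_nonneg {x : ℝ} (hx : 0 ≤ x) : 0 ≤ step x := by
  unfold step
  positivity

lemma monotoneOn_step : MonotoneOn step (Set.Ici 0) := by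
  intro x hx y _ hxy
  have : √(x ^ 2 - 1) ≤ √(y ^ 2 - 1) :=
    Real.sqrt_le_sqrt (by nlinarith [Set.mem_Ici.mp hx])
  unfold step
  linarith

lemma step_le_of_le {x a b : ℝ} (hx : 0 ≤ x) (hxa : x ≤ a) (hab : a ≤ 2 * b)
    (hsq : a ^ 2 - 1 ≤ (2 * b - a) ^ 2) : step x ≤ b := by
  have : √(x ^ 2 - 1) ≤ 2 * b - a :=
    (Real.sqrt_le_left (by linarith)).mpr (by nlinarith)
  unfold step
  linarith

lemma step_iterate_six_two_lt_one : step^[6] 2 < 1 := by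
  have bound {x a : ℝ} (b : ℝ) (hx : 0 ≤ x) (hxa : x ≤ a) (hab : a ≤ 2 * b)
      (hsq : a ^ 2 - 1 ≤ (2 * b - a) ^ 2) : 0 ≤ step x ∧ step x ≤ b :=
    ⟨step_nonneg hx, step_le_of_le hx hxa hab hsq⟩
  simp only [Function.iterate_succ_apply', Function.iterate_zero_apply]
  obtain ⟨h1, h1'⟩ := bound 1.87 zero_le_two le_rfl (by norm_num) (by norm_num)
  obtain ⟨h2, h2'⟩ := bound 1.73 h1 h1' (by norm_num) (by norm_num)
  obtain ⟨h3, h3'⟩ := bound 1.5725 h2 h2' (by norm_num) (by norm_num)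
  obtain ⟨h4, h4'⟩ := bound 1.394 h3 h3' (by norm_num) (by norm_num)
  obtain ⟨h5, h5'⟩ := bound 1.183 h4 h4' (by norm_num) (by norm_num)
  obtain ⟨-, h6'⟩ := bound 0.91 h5 h5' (by norm_num) (by norm_num)
  linarith

noncomputable def normProd (lam : ℕ → ℝ) (i : ℕ) : ℝ :=
  2 * (∏ k ∈ range i, (1 + √(1 - lam k ^ 2))) / 2 ^ i

variable {lam : ℕ → ℝ}

lemma normProd_zero : normProd lam 0 = 2 := by
  simp [normProd]

lemma normProd_succ (i : ℕ) :
    normProd lam (i + 1) = normProd lam i * (1 + √(1 - lam i ^ 2)) / 2 := by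
  simp only [normProd, prod_range_succ, pow_succ]
  field_simp

lemma normProd_nonneg (i : ℕ) : 0 ≤ normProd lam i := by
  unfold normProd
  positivity

lemma fidelity_eq (c : ℝ) (i : ℕ) :
    1/2 + c * lam i / 2 ^ (i + 1) * ∏ k ∈ range i, (1 + √(1 - lam k ^ 2))
      = 1/2 + c * (lam i * normProd lam i) / 4 := by
  simp only [normProd, pow_succ]
  field_simp
  ring

lemma one_lt_mul_normProd {c : ℝ} {i : ℕ} (hc : c ≤ 1) (hl : 0 ≤ lam i)
    (h : 3/4 < 1/2 + c * lam i / 2 ^ (i + 1) * ∏ k ∈ range i, (1 + √(1 - lam k ^ 2))) :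
    1 < lam i * normProd lam i := by
  rw [fidelity_eq] at h
  nlinarith [mul_nonneg hl (normProd_nonneg (lam := lam) i)]

lemma normProd_succ_le_step {i : ℕ} (h : 1 ≤ lam i * normProd lam i) :
    normProd lam (i + 1) ≤ step (normProd lam i) := by
  have := mul_one_add_sqrt_one_sub_sq_le (normProd_nonneg i) zero_le_one h
  rw [one_pow] at this
  rw [normProd_succ, step]
  linarith

lemma normProd_le_step_iterate {n : ℕ} (h : ∀ i < n, 1 ≤ lam i * normProd lam i) :
    ∀ i ≤ n, normProd lam i ≤ step^[i] 2
  | 0, _ => normProd_zero.le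
  | i + 1, hi => by
    have ih := normProd_le_step_iterate h i (by omega)
    rw [Function.iterate_succ_apply']
    exact (normProd_succ_le_step (h i hi)).trans <|
      monotoneOn_step (normProd_nonneg i) ((normProd_nonneg i).trans ih) ih

theorem not_forall_fidelity_gt {c : ℝ} (hc : c ≤ 1)
    (hlam : ∀ i ≤ 6, lam i ∈ Set.Icc (0 : ℝ) 1) :
    ¬ ∀ i ≤ 6,
      3/4 < 1/2 + c * lam i / 2 ^ (i + 1) * ∏ k ∈ range i, (1 + √(1 - lam k ^ 2)) := by
  intro H
  have hsucc (i : ℕ) (hi : i ≤ 6) : 1 < lam i * normProd lam i :=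
    one_lt_mul_normProd hc (hlam i hi).1 (H i hi)
  have hx6 : normProd lam 6 ≤ step^[6] 2 :=
    normProd_le_step_iterate (n := 6) (fun i hi => (hsucc i hi.le).le) 6 le_rfl
  nlinarith [hsucc 6 le_rfl, (hlam 6 le_rfl).2, normProd_nonneg (lam := lam) 6,
    step_iterate_six_two_lt_one]

end RSP

/-- Appendix C: with an initially shared Werner state of parameter `c ∈ [0,1]`,
(i) no 7 observers can all exceed the classical equatorial fidelity bound 3/4;
(ii) the first observer succeeds iff `2 c λ₁ > 1`; in particular when `c ≤ 1/2`
no observer can achieve nonclassical RSP fidelity. -/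
theorem werner_state_rsp :
    (∀ c ∈ Set.Icc (0:ℝ) 1,
      ¬ ∃ lam : Fin 7 → ℝ, (∀ i, lam i ∈ Set.Icc (0:ℝ) 1) ∧
        ∀ i : Fin 7,
          1/2 + c * lam i / 2 ^ ((i : ℕ) + 1)
              * ∏ k ∈ Finset.Iio i, (1 + Real.sqrt (1 - lam k ^ 2)) > 3/4) ∧
    (∀ c ∈ Set.Icc (0:ℝ) 1, ∀ l₁ ∈ Set.Icc (0:ℝ) 1,
      ((1 + c * l₁)/2 > 3/4 ↔ 2 * c * l₁ > 1)) ∧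
    (∀ c ∈ Set.Icc (0:ℝ) 1, c ≤ 1/2 →
      ∀ l₁ ∈ Set.Icc (0:ℝ) 1, (1 + c * l₁)/2 ≤ 3/4) := by
  refine ⟨?_, ?_, ?_⟩
  · rintro c ⟨-, hc⟩ ⟨lam, hlam, H⟩
    refine RSP.not_forall_fidelity_gt (lam := fun k : ℕ => lam (k : Fin 7)) hc
      (fun i _ => hlam _) fun i hi => ?_
    have := H i
    rwa [Fin.prod_Iio_eq_prod_range, Fin.val_cast_of_lt (by omega)] at this
  · rintro c - l₁ -
    constructor <;> intro h <;> linarith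
  · rintro c ⟨hc0, -⟩ hc l₁ ⟨hl0, hl1⟩
    nlinarith [mul_le_mul hc hl1 hl0 (by norm_num : (0:ℝ) ≤ 1/2)]
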